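/- arXiv:1201.6656 — 2 statements merged into one kernel-verified Lean document; each statement's English description precedes it below -/
import Mathlib

section
/- Let q be a natural number and q_0 a natural number all of whose prime factors are at most √x, where x ≥ 2. Then for any α ∈ ℝ and any bounded measurable η : ℝ → ℝ≥0 supported in [0,1], |S_{η,q_0}(x,α) − S_{η,1}(x,α)| ≤ ω(q_0) · ‖η‖_∞ · log x, where S_{η,q}(x,α) := ∑_n Λ(n) e(αn) 1_{gcd(n,q)=1} η(n/x) and ω(q_0) is the number of distinct prime factors of q_0. -/
/-!
Only the `n` sharing a prime factor `p` with `q0` separate the two sums. Such an `n` with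
`Λ n ≠ 0` is a power of `p`, and the powers of `p` up to `N` all divide `p ^ Nat.log p N`, so by
`∑_{d ∣ m} Λ d = log m` their total weight is at most `log N`. Summing over the prime factors of
`q0` and bounding `|e(αn) η(n/x)| ≤ C` gives the claim.
-/

open Finset ArithmeticFunction

lemma Nat.Prime.dvd_pow_log_of_dvd_of_isPrimePow {p n N : ℕ} (hp : p.Prime) (hpn : p ∣ n)
    (hn : IsPrimePow n) (hnN : n ≤ N) : n ∣ p ^ Nat.log p N := by
  obtain ⟨q, k, hq, -, rfl⟩ := hn
  obtain rfl : p = q := (Nat.prime_dvd_prime_iff_eq hp hq.nat_prime).mp (hp.dvd_of_dvd_pow hpn)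
  exact pow_dvd_pow p (Nat.le_log_of_pow_le hp.one_lt hnN)

lemma sum_vonMangoldt_filter_dvd_le {p : ℕ} (hp : p.Prime) (N : ℕ) :
    ∑ n ∈ range (N + 1) with p ∣ n, Λ n ≤ Real.log N := by
  rcases N.eq_zero_or_pos with rfl | hN
  · simp [sum_filter]
  calc ∑ n ∈ range (N + 1) with p ∣ n, Λ n
      = ∑ n ∈ range (N + 1) with p ∣ n ∧ Λ n ≠ 0, Λ n := by
        rw [← filter_filter, sum_filter_ne_zero]
    _ ≤ ∑ n ∈ (p ^ Nat.log p N).divisors, Λ n := by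
        refine sum_le_sum_of_subset_of_nonneg (fun n hn => ?_) fun _ _ _ => vonMangoldt_nonneg
        simp only [mem_filter, mem_range] at hn
        obtain ⟨hnN, hpn, hΛ⟩ := hn
        exact Nat.mem_divisors.mpr ⟨hp.dvd_pow_log_of_dvd_of_isPrimePow hpn
          (vonMangoldt_ne_zero_iff.mp hΛ) (Nat.lt_succ_iff.mp hnN), pow_ne_zero _ hp.ne_zero⟩
    _ = Real.log (p ^ Nat.log p N : ℕ) := vonMangoldt_sum
    _ ≤ Real.log N := by
        gcongr
        · exact_mod_cast (pow_pos hp.pos _)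
        · exact_mod_cast Nat.pow_log_le_self p hN.ne'

lemma sum_vonMangoldt_not_coprime_le {q : ℕ} (hq : q ≠ 0) (N : ℕ) :
    ∑ n ∈ range (N + 1), (if n.Coprime q then 0 else Λ n) ≤
      q.primeFactors.card * Real.log N := by
  calc ∑ n ∈ range (N + 1), (if n.Coprime q then 0 else Λ n)
      ≤ ∑ n ∈ range (N + 1), ∑ p ∈ q.primeFactors, if p ∣ n then Λ n else 0 := by
        refine sum_le_sum fun n _ => ?_
        split_ifs with hcop
        · exact sum_nonneg fun p _ => ite_nonneg vonMangoldt_nonneg le_rfl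
        obtain ⟨p, hp, hpn, hpq⟩ := Nat.Prime.not_coprime_iff_dvd.mp hcop
        calc Λ n = if p ∣ n then Λ n else 0 := (if_pos hpn).symm
          _ ≤ ∑ p ∈ q.primeFactors, if p ∣ n then Λ n else 0 :=
            single_le_sum (f := fun p => if p ∣ n then Λ n else 0)
              (fun p _ => ite_nonneg vonMangoldt_nonneg le_rfl)
              (Nat.mem_primeFactors.mpr ⟨hp, hpq, hq⟩)
    _ = ∑ p ∈ q.primeFactors, ∑ n ∈ range (N + 1) with p ∣ n, Λ n := by
        rw [sum_comm]; simp only [sum_filter]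
    _ ≤ q.primeFactors.card * Real.log N := by
        rw [← nsmul_eq_mul]
        exact sum_le_card_nsmul _ _ _ fun p hp =>
          sum_vonMangoldt_filter_dvd_le (Nat.prime_of_mem_primeFactors hp) N

lemma tsum_eq_sum_range_floor {M : Type*} [AddCommMonoid M] [TopologicalSpace M] {f : ℕ → M}
    {x : ℝ} (hf : ∀ n : ℕ, x < n → f n = 0) : ∑' n, f n = ∑ n ∈ range (⌊x⌋₊ + 1), f n :=
  tsum_eq_sum fun n hn => hf n (Nat.lt_of_floor_lt (by simpa using hn))

lemma Nat.ne_zero_of_forall_prime_dvd_le {q : ℕ} {y : ℝ}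
    (h : ∀ p : ℕ, p.Prime → p ∣ q → (p : ℝ) ≤ y) : q ≠ 0 := by
  rintro rfl
  obtain ⟨p, hp_ge, hp⟩ := Nat.exists_infinite_primes (⌊y⌋₊ + 1)
  exact (Nat.lt_of_floor_lt hp_ge).not_ge (h p hp (dvd_zero p))

theorem S_eta_smash_general (x : ℝ) (hx : 2 ≤ x) (q0 : ℕ)
    (hq0 : ∀ p : ℕ, p.Prime → p ∣ q0 → (p : ℝ) ≤ Real.sqrt x)
    (α : ℝ) (η : ℝ → ℝ) (hnn : ∀ t, 0 ≤ η t)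
    (hsupp : ∀ t, t ∉ Set.Icc (0 : ℝ) 1 → η t = 0) (C : ℝ) (hC : ∀ t, η t ≤ C) :
    ‖(∑' n : ℕ, (ArithmeticFunction.vonMangoldt n : ℂ) *
          Complex.exp (2 * Real.pi * Complex.I * α * n) *
          (if Nat.gcd n q0 = 1 then 1 else 0) * (η ((n : ℝ) / x) : ℝ)) -
        (∑' n : ℕ, (ArithmeticFunction.vonMangoldt n : ℂ) *
          Complex.exp (2 * Real.pi * Complex.I * α * n) *
          (if Nat.gcd n 1 = 1 then 1 else 0) * (η ((n : ℝ) / x) : ℝ))‖ ≤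
      (q0.primeFactors.card : ℝ) * C * Real.log x := by
  have hx0 : 0 < x := by linarith
  have hC0 : 0 ≤ C := (hnn 0).trans (hC 0)
  set S : ℕ → ℕ → ℂ := fun q n => (Λ n : ℂ) * Complex.exp (2 * Real.pi * Complex.I * α * n) *
    (if Nat.gcd n q = 1 then 1 else 0) * (η ((n : ℝ) / x) : ℝ)
  have hS_tsum (q : ℕ) : ∑' n, S q n = ∑ n ∈ range (⌊x⌋₊ + 1), S q n :=
    tsum_eq_sum_range_floor fun n hn => by
      simp [S, hsupp _ fun h => (one_lt_div hx0).mpr hn |>.not_ge h.2]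
  have hS_sub (n : ℕ) : ‖S q0 n - S 1 n‖ ≤ C * if n.Coprime q0 then 0 else Λ n := by
    by_cases hcop : n.Coprime q0
    · rw [if_pos hcop]; simp [S, hcop.gcd_eq_one]
    · rw [if_neg hcop, mul_comm C]
      simpa [S, hcop, abs_of_nonneg vonMangoldt_nonneg, abs_of_nonneg (hnn _), Complex.norm_exp]
        using mul_le_mul_of_nonneg_left (hC (n / x)) vonMangoldt_nonneg
  calc ‖∑' n, S q0 n - ∑' n, S 1 n‖
      = ‖∑ n ∈ range (⌊x⌋₊ + 1), (S q0 n - S 1 n)‖ := by rw [hS_tsum, hS_tsum, sum_sub_distrib]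
    _ ≤ ∑ n ∈ range (⌊x⌋₊ + 1), C * if n.Coprime q0 then 0 else Λ n :=
        (norm_sum_le _ _).trans (sum_le_sum fun n _ => hS_sub n)
    _ ≤ C * (q0.primeFactors.card * Real.log ⌊x⌋₊) := by
        rw [← mul_sum]
        exact mul_le_mul_of_nonneg_left
          (sum_vonMangoldt_not_coprime_le (Nat.ne_zero_of_forall_prime_dvd_le hq0) _) hC0
    _ = q0.primeFactors.card * C * Real.log ⌊x⌋₊ := by ring
    _ ≤ q0.primeFactors.card * C * Real.log x := by
        gcongr
        · exact Nat.cast_pos.mpr (Nat.floor_pos.mpr (by linarith))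
        · exact Nat.floor_le hx0.le

theorem S_eta_smash (x : ℝ) (hx : 2 ≤ x) (q0 : ℕ)
    (hq0 : ∀ p : ℕ, p.Prime → p ∣ q0 → (p : ℝ) ≤ Real.sqrt x)
    (α : ℝ) (η : ℝ → ℝ) (hmeas : Measurable η) (hnn : ∀ t, 0 ≤ η t)
    (hsupp : ∀ t, t ∉ Set.Icc (0 : ℝ) 1 → η t = 0) (C : ℝ) (hC : ∀ t, η t ≤ C) :
    ‖(∑' n : ℕ, (ArithmeticFunction.vonMangoldt n : ℂ) *
          Complex.exp (2 * Real.pi * Complex.I * α * n) *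
          (if Nat.gcd n q0 = 1 then 1 else 0) * (η ((n : ℝ) / x) : ℝ)) -
        (∑' n : ℕ, (ArithmeticFunction.vonMangoldt n : ℂ) *
          Complex.exp (2 * Real.pi * Complex.I * α * n) *
          (if Nat.gcd n 1 = 1 then 1 else 0) * (η ((n : ℝ) / x) : ℝ))‖ ≤
      (q0.primeFactors.card : ℝ) * C * Real.log x :=
  S_eta_smash_general x hx q0 hq0 α η hnn hsupp C hC
end

section
/- For real q ≥ 1, ∫_{1/2}^{q−3/2} y · csc²(πy/(2(q−1))) dy ≤ (2(q−1)/π)² · (log cot(π/(4(q−1))) + 1), provided q ≥ 2. -/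
/-!
Substituting `u = π y / (2(q - 1))` turns the integral into `(2(q - 1)/π)² ∫ u csc² u du` over
`[t, π/2 - t]` with `t = π / (4(q - 1))`. Since `log sin u - u cot u` is an antiderivative of
`u csc² u`, that integral equals `log cos t - (π/2 - t) tan t - log sin t + t cot t`, and
`(π/2 - t) tan t ≥ 0`, `t cot t ≤ 1` give the bound.
-/

open Real

lemma hasDerivAt_log_sin_sub_mul_cot {x : ℝ} (hx : sin x ≠ 0) :
    HasDerivAt (fun y => log (sin y) - y * cot y) (x / sin x ^ 2) x := by
  have hcot : HasDerivAt (fun y => cos y / sin y) (-(1 / sin x ^ 2)) x :=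
    ((hasDerivAt_cos x).div (hasDerivAt_sin x) hx).congr_deriv <| by
      rw [show -sin x * sin x - cos x * cos x = -1 by linear_combination -sin_sq_add_cos_sq x]
      ring
  simp only [cot_eq_cos_div_sin]
  exact (((hasDerivAt_sin x).log hx).sub ((hasDerivAt_id' x).mul hcot)).congr_deriv <| by
    field_simp
    ring

lemma integral_mul_div_sin_sq {α β : ℝ} (hα : 0 < α) (hβ : 0 < β) (hαπ : α < π) (hβπ : β < π) :
    ∫ u in α..β, u / sin u ^ 2 = (log (sin β) - β * cot β) - (log (sin α) - α * cot α) := by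
  have hsin : ∀ u ∈ Set.uIcc α β, sin u ≠ 0 := fun u hu => by
    refine (sin_pos_of_pos_of_lt_pi ?_ ?_).ne' <;>
      rcases Set.mem_uIcc.1 hu with h | h <;> linarith
  refine intervalIntegral.integral_eq_sub_of_hasDerivAt
    (fun u hu => hasDerivAt_log_sin_sub_mul_cot (hsin u hu)) ?_
  exact (continuousOn_id.div (continuous_sin.continuousOn.pow 2)
    fun u hu => pow_ne_zero 2 (hsin u hu)).intervalIntegrable

lemma mul_cot_le_one {t : ℝ} (ht₀ : 0 < t) (ht : t < π / 2) : t * cot t ≤ 1 := by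
  have hcos : 0 < cos t := cos_pos_of_mem_Ioo ⟨by linarith, ht⟩
  have hsin : 0 < sin t := sin_pos_of_pos_of_lt_pi ht₀ (by linarith)
  have hlt := lt_tan ht₀ ht
  rw [tan_eq_sin_div_cos, lt_div_iff₀ hcos] at hlt
  rw [cot_eq_cos_div_sin, mul_div_assoc', div_le_one hsin]
  exact hlt.le

lemma integral_mul_div_sin_sq_le {t : ℝ} (ht₀ : 0 < t) (ht : t < π / 2) :
    ∫ u in t..π / 2 - t, u / sin u ^ 2 ≤ log (cos t / sin t) + 1 := by
  have hsin : 0 < sin t := sin_pos_of_pos_of_lt_pi ht₀ (by linarith)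
  have hcos : 0 < cos t := cos_pos_of_mem_Ioo ⟨by linarith, ht⟩
  have htan : 0 ≤ (π / 2 - t) * (sin t / cos t) := mul_nonneg (by linarith) (by positivity)
  rw [integral_mul_div_sin_sq ht₀ (by linarith) (by linarith) (by linarith), sin_pi_div_two_sub,
    cot_eq_cos_div_sin (π / 2 - t), sin_pi_div_two_sub, cos_pi_div_two_sub,
    log_div hcos.ne' hsin.ne']
  linarith [mul_cot_le_one ht₀ ht]

theorem cosec_integral_bound (q : ℝ) (hq : 2 ≤ q) :
    (∫ y in (1/2 : ℝ)..(q - 3/2),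
        y * (1 / Real.sin (Real.pi * y / (2 * (q - 1)))) ^ 2) ≤
      (2 * (q - 1) / Real.pi) ^ 2 *
        (Real.log (Real.cos (Real.pi / (4 * (q - 1))) /
            Real.sin (Real.pi / (4 * (q - 1)))) + 1) := by
  have hq₁ : 0 < q - 1 := by linarith
  set a := π / (2 * (q - 1)) with ha
  set t := π / (4 * (q - 1)) with ht
  have ha₀ : 0 < a := by positivity
  have ht₀ : 0 < t := by positivity
  have htπ : t < π / 2 := div_lt_div_of_pos_left pi_pos two_pos (by linarith)
  have hintegrand (y : ℝ) :
      y * (1 / sin (π * y / (2 * (q - 1)))) ^ 2 = a⁻¹ * (a * y / sin (a * y) ^ 2) := by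
    rw [ha]; field_simp
  have hlo : a * (1 / 2) = t := by rw [ha, ht]; field_simp; ring
  have hhi : a * (q - 3 / 2) = π / 2 - t := by rw [ha, ht]; field_simp; ring
  rw [intervalIntegral.integral_congr fun y _ => hintegrand y, intervalIntegral.integral_const_mul,
    intervalIntegral.integral_comp_mul_left (fun u => u / sin u ^ 2) ha₀.ne', hlo, hhi,
    smul_eq_mul, ← mul_assoc, ← sq, ha, inv_div]
  gcongr
  exact integral_mul_div_sin_sq_le ht₀ htπ
end
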